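/- arXiv:1908.07266 — 4 statements merged into one kernel-verified Lean document; each statement's English description precedes it below -/
import Mathlib

section
/- Let ν ∈ ℝ be such that ν + 3/2 is not zero or a negative integer, and suppose ν ≥ (e/(8 sin 1 + 6 − 2e))·[4(e−1)³ + 6(e−1)² + (e+1) + 6/e − 12/e²] − 3/2. Then, writing V_ν(z) = ∑_{n≥0} ((1/4)^n / ((3/2)_n (ν+3/2)_n)) z^n (the normalized modified Struve function of the first kind, case b = 1, c = −1), the function 3(2ν+3)(V_ν − 1) belongs to K_e and the function z ↦ 3(2ν+3) z V'_ν(z) belongs to S*_e. -/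
open Complex Metric Set

noncomputable def poch (x : ℂ) (n : ℕ) : ℂ := ∏ k ∈ Finset.range n, (x + k)

/-- The class `P_e`: `p` is analytic on the unit disk, `p 0 = 1`, and `p` maps the
unit disk into `exp(𝔻)` (equivalently, `p` is subordinate to `exp`). -/
def memPe (p : ℂ → ℂ) : Prop :=
  AnalyticOnNhd ℂ p (Metric.ball 0 1) ∧ p 0 = 1 ∧
    ∀ z ∈ Metric.ball (0:ℂ) 1, p z ∈ Complex.exp '' Metric.ball 0 1

/-- The class `K_e` of exponential convex functions. -/
def memKe (f : ℂ → ℂ) : Prop :=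
  AnalyticOnNhd ℂ f (Metric.ball 0 1) ∧ f 0 = 0 ∧ deriv f 0 = 1 ∧
    (∀ z ∈ Metric.ball (0:ℂ) 1, deriv f z ≠ 0) ∧
    memPe (fun z => 1 + z * deriv (deriv f) z / deriv f z)

/-- The class `S*_e` of exponential starlike functions. -/
def memSe (f : ℂ → ℂ) : Prop :=
  AnalyticOnNhd ℂ f (Metric.ball 0 1) ∧ f 0 = 0 ∧ deriv f 0 = 1 ∧
    (∀ z ∈ Metric.ball (0:ℂ) 1, z ≠ 0 → f z ≠ 0) ∧
    memPe (fun z => if z = 0 then 1 else z * deriv f z / f z)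

/-- The normalized generalized Struve function of the first kind
`u_{κ,c}(z) = ∑_{n≥0} ((−c/4)^n / ((3/2)_n (κ)_n)) z^n`. -/
noncomputable def struveU (κ c : ℂ) (z : ℂ) : ℂ :=
  ∑' n : ℕ, (-c / 4) ^ n / (poch (3/2) n * poch κ n) * z ^ n

/-! With `κ = ν + 3/2`, the hypothesis on `ν` forces `κ ≥ 10`. Then the coefficients of
`f = 6κ(V_ν − 1) = z + ⋯` decay like `100⁻ⁿ`, so on the unit disk `|f' − 1| ≤ 1/49` and
`|f''| ≤ 1/48`. Hence `p = 1 + z f''/f'` satisfies `|p − 1| ≤ 1/2`, so `p = exp (log p)` with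
`|log p| < 1`. Since `z g'/g = p` for `g = z f'`, the same `p` witnesses both claims. -/

open Finset Topology

lemma mem_exp_image_ball_of_norm_sub_one_le {w : ℂ} (hw : ‖w - 1‖ ≤ 1 / 2) :
    w ∈ exp '' ball 0 1 := by
  have hw0 : w ≠ 0 := by
    rintro rfl
    norm_num at hw
  refine ⟨log w, ?_, exp_log hw0⟩
  have hlog : ‖log (1 + (w - 1))‖ ≤ 3 / 2 * ‖w - 1‖ := norm_log_one_add_half_le_self hw
  rw [add_sub_cancel] at hlog
  rw [mem_ball_zero_iff]
  linarith

lemma memPe_of_norm_sub_one_le {p : ℂ → ℂ} (hp : AnalyticOnNhd ℂ p (ball 0 1)) (hp0 : p 0 = 1)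
    (hbound : ∀ z ∈ ball (0 : ℂ) 1, ‖p z - 1‖ ≤ 1 / 2) : memPe p :=
  ⟨hp, hp0, fun z hz => mem_exp_image_ball_of_norm_sub_one_le (hbound z hz)⟩

lemma memPe.congr {p q : ℂ → ℂ} (hp : memPe p) (hpq : EqOn p q (ball 0 1)) : memPe q := by
  obtain ⟨han, hp0, himage⟩ := hp
  have h0 : (0 : ℂ) ∈ ball (0 : ℂ) 1 := mem_ball_self one_pos
  exact ⟨han.congr isOpen_ball hpq, hpq h0 ▸ hp0, fun z hz => hpq hz ▸ himage z hz⟩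

section Criterion

variable {f : ℂ → ℂ}

lemma memPe_one_add_mul_deriv_deriv_div_deriv (hf : DifferentiableOn ℂ f (ball 0 1))
    (hf' : ∀ z ∈ ball (0 : ℂ) 1, deriv f z ≠ 0)
    (hbound : ∀ z ∈ ball (0 : ℂ) 1, ‖z * deriv (deriv f) z / deriv f z‖ ≤ 1 / 2) :
    memPe (fun z => 1 + z * deriv (deriv f) z / deriv f z) := by
  have hd : DifferentiableOn ℂ (deriv f) (ball 0 1) := hf.deriv isOpen_ball
  have hdd : DifferentiableOn ℂ (deriv (deriv f)) (ball 0 1) := hd.deriv isOpen_ball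
  refine memPe_of_norm_sub_one_le ?_ (by simp) fun z hz => by simpa using hbound z hz
  exact ((differentiableOn_const 1).add
    ((differentiableOn_id.mul hdd).div hd hf')).analyticOnNhd isOpen_ball

theorem memKe_of_norm_mul_deriv_deriv_div_deriv_le (hf : DifferentiableOn ℂ f (ball 0 1))
    (hf' : ∀ z ∈ ball (0 : ℂ) 1, deriv f z ≠ 0)
    (hbound : ∀ z ∈ ball (0 : ℂ) 1, ‖z * deriv (deriv f) z / deriv f z‖ ≤ 1 / 2)
    (hf0 : f 0 = 0) (hf'0 : deriv f 0 = 1) :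
    memKe f :=
  ⟨hf.analyticOnNhd isOpen_ball, hf0, hf'0, hf',
    memPe_one_add_mul_deriv_deriv_div_deriv hf hf' hbound⟩

theorem memSe_mul_deriv_of_norm_mul_deriv_deriv_div_deriv_le
    (hf : DifferentiableOn ℂ f (ball 0 1)) (hf' : ∀ z ∈ ball (0 : ℂ) 1, deriv f z ≠ 0)
    (hbound : ∀ z ∈ ball (0 : ℂ) 1, ‖z * deriv (deriv f) z / deriv f z‖ ≤ 1 / 2)
    (hf'0 : deriv f 0 = 1) :
    memSe (fun z => z * deriv f z) := by
  have hd : DifferentiableOn ℂ (deriv f) (ball 0 1) := hf.deriv isOpen_ball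
  have hderiv : ∀ z ∈ ball (0 : ℂ) 1,
      deriv (fun z => z * deriv f z) z = deriv f z + z * deriv (deriv f) z := by
    intro z hz
    have := (hasDerivAt_id' z).fun_mul
      ((hd z hz).differentiableAt (isOpen_ball.mem_nhds hz)).hasDerivAt
    simpa using this.deriv
  have h0 : (0 : ℂ) ∈ ball (0 : ℂ) 1 := mem_ball_self one_pos
  refine ⟨(differentiableOn_id.mul hd).analyticOnNhd isOpen_ball, by simp, ?_,
    fun z hz hz0 => mul_ne_zero hz0 (hf' z hz), ?_⟩
  · simpa [hf'0] using hderiv 0 h0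
  · refine (memPe_one_add_mul_deriv_deriv_div_deriv hf hf' hbound).congr fun z hz => ?_
    by_cases hz0 : z = 0
    · simp [hz0]
    · simp only [hz0, if_false, hderiv z hz]
      field_simp [hf' z hz]

end Criterion

section PowerSeries

def derivCoeff (a : ℕ → ℂ) (n : ℕ) : ℂ := (n + 1) * a (n + 1)

lemma norm_mul_pow_le_of_norm_le_one (c : ℂ) (n : ℕ) {z : ℂ} (hz : ‖z‖ ≤ 1) :
    ‖c * z ^ n‖ ≤ ‖c‖ := by
  rw [norm_mul, norm_pow]
  exact mul_le_of_le_one_right (norm_nonneg c) (pow_le_one₀ (norm_nonneg z) hz)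

lemma hasDerivAt_tsum_mul_pow {a : ℕ → ℂ} (ha : Summable fun n => ‖derivCoeff a n‖) {z : ℂ}
    (hz : z ∈ ball (0 : ℂ) 1) :
    HasDerivAt (fun w => ∑' n, a n * w ^ n) (∑' n, derivCoeff a n * z ^ n) z := by
  have hu : Summable fun n : ℕ => ‖(n : ℂ) * a n‖ := by
    refine (summable_nat_add_iff 1).mp (ha.congr fun n => ?_)
    simp [derivCoeff]
  have hbound : ∀ (n : ℕ) (w : ℂ), w ∈ ball (0 : ℂ) 1 →
      ‖a n * ((n : ℂ) * w ^ (n - 1))‖ ≤ ‖(n : ℂ) * a n‖ := fun n w hw => by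
    rw [mul_left_comm, ← mul_assoc]
    exact norm_mul_pow_le_of_norm_le_one _ _ (mem_ball_zero_iff.mp hw).le
  have hderiv := hasDerivAt_tsum_of_isPreconnected (g := fun n w => a n * w ^ n) hu isOpen_ball
    (convex_ball 0 1).isPreconnected (fun n w _ => (hasDerivAt_pow n w).const_mul (a n)) hbound
    (mem_ball_self one_pos) (summable_of_ne_finset_zero (s := {0}) fun n hn => by simp_all) hz
  have hshift : ∑' n : ℕ, a n * ((n : ℂ) * z ^ (n - 1)) = ∑' n, derivCoeff a n * z ^ n := by
    rw [(Summable.of_norm_bounded hu fun n => hbound n z hz).tsum_eq_zero_add]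
    simp only [derivCoeff, Nat.cast_zero, zero_mul, mul_zero, zero_add, Nat.cast_add,
      Nat.cast_one, add_tsub_cancel_right]
    exact tsum_congr fun n => by ring
  exact hshift ▸ hderiv

lemma norm_tsum_mul_pow_le {c : ℕ → ℂ} {C r : ℝ} (hr0 : 0 ≤ r) (hr : r < 1)
    (hc : ∀ n, ‖c n‖ ≤ C * r ^ n) {z : ℂ} (hz : ‖z‖ ≤ 1) :
    ‖∑' n, c n * z ^ n‖ ≤ C / (1 - r) := by
  have hgeom : Summable fun n => C * r ^ n := (summable_geometric_of_lt_one hr0 hr).mul_left C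
  calc ‖∑' n, c n * z ^ n‖ ≤ ∑' n, C * r ^ n :=
        tsum_of_norm_bounded hgeom.hasSum fun n =>
          (norm_mul_pow_le_of_norm_le_one _ n hz).trans (hc n)
    _ = C / (1 - r) := by rw [tsum_mul_left, tsum_geometric_of_lt_one hr0 hr, div_eq_mul_inv]

lemma norm_tsum_mul_pow_sub_coeff_zero_le {c : ℕ → ℂ} {C r : ℝ} (hr0 : 0 ≤ r) (hr : r < 1)
    (hc : ∀ n, ‖c n‖ ≤ C * r ^ n) {z : ℂ} (hz : ‖z‖ ≤ 1) :
    ‖∑' n, c n * z ^ n - c 0‖ ≤ C * r / (1 - r) := by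
  have hsum : Summable fun n => c n * z ^ n :=
    .of_norm_bounded ((summable_geometric_of_lt_one hr0 hr).mul_left C) fun n =>
      (norm_mul_pow_le_of_norm_le_one _ n hz).trans (hc n)
  have htail : ∑' n, c n * z ^ n - c 0 = z * ∑' n, c (n + 1) * z ^ n := by
    rw [hsum.tsum_eq_zero_add, pow_zero, mul_one, add_sub_cancel_left, ← tsum_mul_left]
    exact tsum_congr fun n => by ring
  rw [htail, norm_mul]
  refine (mul_le_of_le_one_left (norm_nonneg _) hz).trans
    (norm_tsum_mul_pow_le hr0 hr (fun n => ?_) hz)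
  simpa [pow_succ, mul_assoc, mul_comm, mul_left_comm] using hc (n + 1)

lemma tsum_mul_zero_pow (c : ℕ → ℂ) : ∑' n, c n * 0 ^ n = c 0 := by
  rw [tsum_eq_single 0 fun n hn => by simp [hn]]
  simp

lemma norm_natCast_add_one_mul_le (n : ℕ) (c : ℂ) : ‖((n : ℂ) + 1) * c‖ ≤ 2 ^ n * ‖c‖ := by
  rw [norm_mul]
  gcongr
  rw [show (n : ℂ) + 1 = ((n + 1 : ℕ) : ℂ) by push_cast; rfl, Complex.norm_natCast]
  exact_mod_cast Nat.lt_two_pow_self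

lemma summable_norm_of_norm_mul_le {c : ℂ} (hc : c ≠ 0) {b : ℕ → ℂ} {C r : ℝ} (hr0 : 0 ≤ r)
    (hr : r < 1) (hb : ∀ n, ‖c * b n‖ ≤ C * r ^ n) : Summable fun n => ‖b n‖ := by
  have hsum : Summable fun n => ‖c‖ * ‖b n‖ := by
    simpa only [norm_mul] using Summable.of_nonneg_of_le (fun n => norm_nonneg _) hb
      ((summable_geometric_of_lt_one hr0 hr).mul_left C)
  exact (summable_mul_left_iff (norm_ne_zero_iff.mpr hc)).mp hsum

end PowerSeries

section Struve

variable {κ : ℝ}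

noncomputable def struveCoeff (κ : ℝ) (n : ℕ) : ℂ := (1 / 4) ^ n / (poch (3 / 2) n * poch κ n)

lemma struveU_neg_one (κ : ℝ) :
    struveU κ (-1) = fun z => ∑' n, struveCoeff κ n * z ^ n := by
  ext z
  simp only [struveU, struveCoeff]
  norm_num

lemma poch_ofReal (x : ℝ) (n : ℕ) : poch x n = ((∏ k ∈ range n, (x + k) : ℝ) : ℂ) := by
  simp [poch]

lemma mul_pow_le_prod_range_succ {x : ℝ} (hx : 0 ≤ x) (m : ℕ) :
    x * (x + 1) ^ m ≤ ∏ k ∈ range (m + 1), (x + k) := by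
  rw [prod_range_succ', Nat.cast_zero, add_zero, mul_comm]
  gcongr
  calc (x + 1) ^ m = ∏ _k ∈ range m, (x + 1) := by rw [prod_const, card_range]
    _ ≤ ∏ k ∈ range m, (x + ((k + 1 : ℕ) : ℝ)) :=
      prod_le_prod (fun _ _ => by positivity) fun k _ => by
        push_cast; linarith [(k.cast_nonneg : (0 : ℝ) ≤ k)]

lemma norm_six_mul_struveCoeff_succ_le (hκ : 10 ≤ κ) (m : ℕ) :
    ‖6 * (κ : ℂ) * struveCoeff κ (m + 1)‖ ≤ (1 / 100) ^ m := by
  have hcoeff : 6 * (κ : ℂ) * struveCoeff κ (m + 1) = ((6 * κ * (1 / 4) ^ (m + 1) /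
      ((∏ k ∈ range (m + 1), ((3 / 2 : ℝ) + k)) * ∏ k ∈ range (m + 1), (κ + k)) : ℝ) : ℂ) := by
    rw [struveCoeff, show ((3 : ℂ) / 2) = ((3 / 2 : ℝ) : ℂ) by norm_num, poch_ofReal, poch_ofReal]
    push_cast
    ring
  have hP := mul_pow_le_prod_range_succ (x := 3 / 2) (by norm_num) m
  have hQ := mul_pow_le_prod_range_succ (x := κ) (by linarith) m
  set P := ∏ k ∈ range (m + 1), ((3 / 2 : ℝ) + k)
  set Q := ∏ k ∈ range (m + 1), (κ + k)
  have hlower : 0 < (3 / 2 * (5 / 2) ^ m) * (κ * 10 ^ m) := by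
    have : 0 < κ := by linarith
    positivity
  have hPQ : (3 / 2 * (5 / 2) ^ m) * (κ * 10 ^ m) ≤ P * Q := by
    have hQ' : κ * 10 ^ m ≤ κ * (κ + 1) ^ m := by gcongr; linarith
    norm_num at hP
    exact mul_le_mul hP (hQ'.trans hQ) (by positivity) ((by positivity : (0 : ℝ) ≤ _).trans hP)
  rw [hcoeff, Complex.norm_real, Real.norm_of_nonneg (by positivity),
    div_le_iff₀ (hlower.trans_le hPQ)]
  calc 6 * κ * (1 / 4) ^ (m + 1) = (1 / 100) ^ m * ((3 / 2 * (5 / 2) ^ m) * (κ * 10 ^ m)) := by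
        rw [pow_succ, show (1 / 4 : ℝ) = 1 / 100 * (5 / 2) * 10 by norm_num, mul_pow, mul_pow]
        ring
    _ ≤ (1 / 100) ^ m * (P * Q) := by gcongr

lemma struveCoeff_zero (κ : ℝ) : struveCoeff κ 0 = 1 := by
  simp [struveCoeff, poch]

lemma six_mul_struveCoeff_one (hκ : κ ≠ 0) : 6 * (κ : ℂ) * struveCoeff κ 1 = 1 := by
  have : (κ : ℂ) ≠ 0 := by exact_mod_cast hκ
  simp only [struveCoeff, poch, prod_range_one, Nat.cast_zero, add_zero, pow_one]
  field_simp
  norm_num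

lemma norm_six_mul_derivCoeff_struveCoeff_le (hκ : 10 ≤ κ) (n : ℕ) :
    ‖6 * (κ : ℂ) * derivCoeff (struveCoeff κ) n‖ ≤ 1 * (1 / 50) ^ n := by
  rw [derivCoeff, mul_left_comm]
  calc _ ≤ 2 ^ n * ‖6 * (κ : ℂ) * struveCoeff κ (n + 1)‖ := norm_natCast_add_one_mul_le _ _
    _ ≤ 2 ^ n * (1 / 100) ^ n := by gcongr; exact norm_six_mul_struveCoeff_succ_le hκ n
    _ = 1 * (1 / 50) ^ n := by rw [← mul_pow]; norm_num

lemma norm_six_mul_derivCoeff_derivCoeff_struveCoeff_le (hκ : 10 ≤ κ) (n : ℕ) :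
    ‖6 * (κ : ℂ) * derivCoeff (derivCoeff (struveCoeff κ)) n‖ ≤ 1 / 50 * (1 / 25) ^ n := by
  have hrw : 6 * (κ : ℂ) * derivCoeff (derivCoeff (struveCoeff κ)) n =
      ((n : ℂ) + 1) * ((((n + 1 : ℕ) : ℂ) + 1) * (6 * κ * struveCoeff κ (n + 1 + 1))) := by
    simp only [derivCoeff]; push_cast; ring
  rw [hrw]
  calc _ ≤ 2 ^ n * (2 ^ (n + 1) * ‖6 * (κ : ℂ) * struveCoeff κ (n + 1 + 1)‖) :=
        (norm_natCast_add_one_mul_le _ _).trans (by gcongr; exact norm_natCast_add_one_mul_le _ _)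
    _ ≤ 2 ^ n * (2 ^ (n + 1) * (1 / 100) ^ (n + 1)) := by
        gcongr; exact norm_six_mul_struveCoeff_succ_le hκ (n + 1)
    _ = 1 / 50 * (1 / 25) ^ n := by
        rw [pow_succ, pow_succ, show (1 / 25 : ℝ) = 2 * 2 * (1 / 100) by norm_num, mul_pow,
          mul_pow]
        ring

lemma hasDerivAt_struveU (hκ : 10 ≤ κ) {z : ℂ} (hz : z ∈ ball (0 : ℂ) 1) :
    HasDerivAt (struveU κ (-1)) (∑' n, derivCoeff (struveCoeff κ) n * z ^ n) z := by
  have h6κ : 6 * (κ : ℂ) ≠ 0 := by norm_cast; linarith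
  rw [struveU_neg_one]
  exact hasDerivAt_tsum_mul_pow (summable_norm_of_norm_mul_le h6κ (by norm_num) (by norm_num)
    (norm_six_mul_derivCoeff_struveCoeff_le hκ)) hz

lemma hasDerivAt_tsum_derivCoeff_struveCoeff (hκ : 10 ≤ κ) {z : ℂ} (hz : z ∈ ball (0 : ℂ) 1) :
    HasDerivAt (fun w => ∑' n, derivCoeff (struveCoeff κ) n * w ^ n)
      (∑' n, derivCoeff (derivCoeff (struveCoeff κ)) n * z ^ n) z := by
  have h6κ : 6 * (κ : ℂ) ≠ 0 := by norm_cast; linarith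
  exact hasDerivAt_tsum_mul_pow (summable_norm_of_norm_mul_le h6κ (by norm_num) (by norm_num)
    (norm_six_mul_derivCoeff_derivCoeff_struveCoeff_le hκ)) hz

/-- The function `3(2ν+3)(V_ν − 1)` of the paper, with `κ = ν + 3/2`. -/
noncomputable def normalizedStruve (κ : ℝ) (z : ℂ) : ℂ := 6 * κ * (struveU κ (-1) z - 1)

lemma normalizedStruve_zero (κ : ℝ) : normalizedStruve κ 0 = 0 := by
  simp [normalizedStruve, struveU_neg_one, tsum_mul_zero_pow, struveCoeff_zero]

lemma deriv_normalizedStruve (hκ : 10 ≤ κ) {z : ℂ} (hz : z ∈ ball (0 : ℂ) 1) :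
    deriv (normalizedStruve κ) z = 6 * κ * ∑' n, derivCoeff (struveCoeff κ) n * z ^ n :=
  (((hasDerivAt_struveU hκ hz).sub_const 1).const_mul _).deriv

lemma deriv_deriv_normalizedStruve (hκ : 10 ≤ κ) {z : ℂ} (hz : z ∈ ball (0 : ℂ) 1) :
    deriv (deriv (normalizedStruve κ)) z =
      6 * κ * ∑' n, derivCoeff (derivCoeff (struveCoeff κ)) n * z ^ n := by
  have hnear : deriv (normalizedStruve κ) =ᶠ[𝓝 z]
      fun w => 6 * κ * ∑' n, derivCoeff (struveCoeff κ) n * w ^ n :=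
    Filter.eventually_of_mem (isOpen_ball.mem_nhds hz) fun w hw => deriv_normalizedStruve hκ hw
  rw [hnear.deriv_eq]
  exact ((hasDerivAt_tsum_derivCoeff_struveCoeff hκ hz).const_mul _).deriv

lemma deriv_normalizedStruve_zero (hκ : 10 ≤ κ) : deriv (normalizedStruve κ) 0 = 1 := by
  rw [deriv_normalizedStruve hκ (mem_ball_self one_pos), tsum_mul_zero_pow, derivCoeff,
    mul_left_comm, six_mul_struveCoeff_one (by linarith)]
  simp

lemma norm_deriv_normalizedStruve_sub_one_le (hκ : 10 ≤ κ) {z : ℂ} (hz : z ∈ ball (0 : ℂ) 1) :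
    ‖deriv (normalizedStruve κ) z - 1‖ ≤ 1 / 49 := by
  have hbound := norm_tsum_mul_pow_sub_coeff_zero_le (by norm_num) (by norm_num)
    (norm_six_mul_derivCoeff_struveCoeff_le hκ) (mem_ball_zero_iff.mp hz).le
  rw [derivCoeff, mul_left_comm, six_mul_struveCoeff_one (by linarith)] at hbound
  rw [deriv_normalizedStruve hκ hz, ← tsum_mul_left]
  simp only [← mul_assoc] at hbound ⊢
  norm_num at hbound ⊢
  exact hbound

lemma norm_deriv_deriv_normalizedStruve_le (hκ : 10 ≤ κ) {z : ℂ} (hz : z ∈ ball (0 : ℂ) 1) :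
    ‖deriv (deriv (normalizedStruve κ)) z‖ ≤ 1 / 48 := by
  have hbound := norm_tsum_mul_pow_le (by norm_num) (by norm_num)
    (norm_six_mul_derivCoeff_derivCoeff_struveCoeff_le hκ) (mem_ball_zero_iff.mp hz).le
  rw [deriv_deriv_normalizedStruve hκ hz, ← tsum_mul_left]
  simp only [← mul_assoc] at hbound ⊢
  norm_num at hbound ⊢
  exact hbound

lemma deriv_normalizedStruve_ne_zero (hκ : 10 ≤ κ) {z : ℂ} (hz : z ∈ ball (0 : ℂ) 1) :
    deriv (normalizedStruve κ) z ≠ 0 := by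
  intro h0
  have := norm_deriv_normalizedStruve_sub_one_le hκ hz
  norm_num [h0] at this

lemma norm_mul_deriv_deriv_div_deriv_normalizedStruve_le (hκ : 10 ≤ κ) {z : ℂ}
    (hz : z ∈ ball (0 : ℂ) 1) :
    ‖z * deriv (deriv (normalizedStruve κ)) z / deriv (normalizedStruve κ) z‖ ≤ 1 / 2 := by
  have hfar : 48 / 49 ≤ ‖deriv (normalizedStruve κ) z‖ := by
    have := norm_sub_norm_le (1 : ℂ) (deriv (normalizedStruve κ) z)
    rw [norm_sub_rev] at this
    linarith [norm_deriv_normalizedStruve_sub_one_le hκ hz, norm_one (α := ℂ)]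
  rw [norm_div, norm_mul, div_le_iff₀ (by linarith)]
  calc ‖z‖ * ‖deriv (deriv (normalizedStruve κ)) z‖ ≤ 1 * (1 / 48) :=
        mul_le_mul (mem_ball_zero_iff.mp hz).le (norm_deriv_deriv_normalizedStruve_le hκ hz)
          (norm_nonneg _) zero_le_one
    _ ≤ 1 / 2 * ‖deriv (normalizedStruve κ) z‖ := by linarith

lemma differentiableOn_normalizedStruve (hκ : 10 ≤ κ) :
    DifferentiableOn ℂ (normalizedStruve κ) (ball 0 1) := fun _z hz =>
  (((hasDerivAt_struveU hκ hz).sub_const 1).const_mul _).differentiableAt.differentiableWithinAt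

theorem memKe_normalizedStruve (hκ : 10 ≤ κ) : memKe (normalizedStruve κ) :=
  memKe_of_norm_mul_deriv_deriv_div_deriv_le (differentiableOn_normalizedStruve hκ)
    (fun _ => deriv_normalizedStruve_ne_zero hκ)
    (fun _ => norm_mul_deriv_deriv_div_deriv_normalizedStruve_le hκ)
    (normalizedStruve_zero κ) (deriv_normalizedStruve_zero hκ)

theorem memSe_mul_deriv_normalizedStruve (hκ : 10 ≤ κ) :
    memSe (fun z => z * deriv (normalizedStruve κ) z) :=
  memSe_mul_deriv_of_norm_mul_deriv_deriv_div_deriv_le (differentiableOn_normalizedStruve hκ)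
    (fun _ => deriv_normalizedStruve_ne_zero hκ)
    (fun _ => norm_mul_deriv_deriv_div_deriv_normalizedStruve_le hκ)
    (deriv_normalizedStruve_zero hκ)

end Struve

lemma twenty_three_halves_le_threshold :
    (23 / 2 : ℝ) ≤ Real.exp 1 / (8 * Real.sin 1 + 6 - 2 * Real.exp 1) *
      (4 * (Real.exp 1 - 1) ^ 3 + 6 * (Real.exp 1 - 1) ^ 2 + (Real.exp 1 + 1) +
        6 / Real.exp 1 - 12 / (Real.exp 1) ^ 2) := by
  have he1 := Real.exp_one_gt_d9
  have he2 := Real.exp_one_lt_d9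
  have hsin1 : Real.sin 1 ≤ 1 := Real.sin_le_one 1
  have hsin0 : 0 < Real.sin 1 :=
    Real.sin_pos_of_pos_of_lt_pi one_pos (by linarith [Real.pi_gt_three])
  set e := Real.exp 1
  have hden : 0 < 8 * Real.sin 1 + 6 - 2 * e := by linarith
  have hratio : (0.317 : ℝ) ≤ e / (8 * Real.sin 1 + 6 - 2 * e) := by
    rw [le_div_iff₀ hden]; linarith
  have hbracket : (40 : ℝ) ≤ 4 * (e - 1) ^ 3 + 6 * (e - 1) ^ 2 + (e + 1) + 6 / e - 12 / e ^ 2 := by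
    have h6 : (2.2 : ℝ) ≤ 6 / e := by rw [le_div_iff₀ (by linarith)]; linarith
    have h12 : 12 / e ^ 2 ≤ (1.7 : ℝ) := by rw [div_le_iff₀ (by positivity)]; nlinarith
    have h1 : (1.718 : ℝ) ≤ e - 1 := by linarith
    have h2 : (2.95 : ℝ) ≤ (e - 1) ^ 2 := by nlinarith
    have h3 : (5.06 : ℝ) ≤ (e - 1) ^ 3 := by nlinarith
    linarith
  nlinarith

theorem modified_struve_convex_starlike_general (ν : ℝ)
    (h : ν ≥ Real.exp 1 / (8 * Real.sin 1 + 6 - 2 * Real.exp 1) *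
        (4 * (Real.exp 1 - 1) ^ 3 + 6 * (Real.exp 1 - 1) ^ 2 + (Real.exp 1 + 1) +
          6 / Real.exp 1 - 12 / (Real.exp 1) ^ 2) - 3 / 2) :
    memKe (fun z => 3 * (2 * (ν : ℂ) + 3) * (struveU ((ν : ℂ) + 3 / 2) (-1) z - 1)) ∧
    memSe (fun z => 3 * (2 * (ν : ℂ) + 3) * z * deriv (struveU ((ν : ℂ) + 3 / 2) (-1)) z) := by
  have hκ : 10 ≤ ν + 3 / 2 := by linarith [twenty_three_halves_le_threshold]
  have hf : (fun z => 3 * (2 * (ν : ℂ) + 3) * (struveU ((ν : ℂ) + 3 / 2) (-1) z - 1)) =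
      normalizedStruve (ν + 3 / 2) := by
    ext z
    simp only [normalizedStruve]
    push_cast
    ring
  have hg : (fun z => 3 * (2 * (ν : ℂ) + 3) * z * deriv (struveU ((ν : ℂ) + 3 / 2) (-1)) z) =
      fun z => z * deriv (normalizedStruve (ν + 3 / 2)) z := by
    ext z
    rw [← hf, deriv_const_mul_field']
    simp only [deriv_sub_const]
    ring
  rw [hf, hg]
  exact ⟨memKe_normalizedStruve hκ, memSe_mul_deriv_normalizedStruve hκ⟩

/-- For the normalized modified Struve function `V_ν = u_{ν+3/2, −1}` (case `b = 1`,
`c = −1`), under the stated condition on `ν`, the function `3(2ν+3)(V_ν − 1)` is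
exponential convex and `z ↦ 3(2ν+3) z V'_ν(z)` is exponential starlike. -/
theorem modified_struve_convex_starlike (ν : ℝ) (hν : ∀ n : ℕ, ν + 3 / 2 ≠ -(n : ℝ))
    (h : ν ≥ Real.exp 1 / (8 * Real.sin 1 + 6 - 2 * Real.exp 1) *
        (4 * (Real.exp 1 - 1) ^ 3 + 6 * (Real.exp 1 - 1) ^ 2 + (Real.exp 1 + 1) +
          6 / Real.exp 1 - 12 / (Real.exp 1) ^ 2) - 3 / 2) :
    memKe (fun z => 3 * (2 * (ν : ℂ) + 3) * (struveU ((ν : ℂ) + 3 / 2) (-1) z - 1)) ∧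
    memSe (fun z => 3 * (2 * (ν : ℂ) + 3) * z * deriv (struveU ((ν : ℂ) + 3 / 2) (-1)) z) :=
  modified_struve_convex_starlike_general ν h
end

section
/- For every θ ∈ ℝ one has Re((e^{e^{iθ}} − e^{−e^{iθ}}) e^{−iθ}) = e^{cos θ} cos(θ − sin θ) − e^{−cos θ} cos(θ + sin θ) ≥ 2 sin 1, and equality holds at θ = π/2 (and at θ = 3π/2); in other words, the minimum over θ ∈ [0, 2π) of this expression equals 2 sin 1. -/
open Complex Metric Set Real

lemma aux_sq_le_sinh_sq (x : ℝ) : x^2 ≤ Real.sinh x ^ 2 := by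
  rcases le_or_gt 0 x with h | h
  · have := (Real.self_le_sinh_iff).2 h
    nlinarith
  · have hx : (0:ℝ) ≤ -x := by linarith
    have := (Real.self_le_sinh_iff).2 hx
    rw [Real.sinh_neg] at this
    nlinarith

lemma aux_cosh_ge (x : ℝ) : 1 + x^2/2 ≤ Real.cosh x := by
  have h := Real.cosh_two_mul (x/2)
  have h2 := Real.cosh_sq (x/2)
  have h3 := aux_sq_le_sinh_sq (x/2)
  have hx : Real.cosh x = 1 + 2 * Real.sinh (x/2)^2 := by
    have h4 : (2:ℝ) * (x/2) = x := by ring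
    rw [← h4, h, h2]; ring
  nlinarith

lemma aux_mul_sinh_ge (x : ℝ) : x^2 ≤ x * Real.sinh x := by
  rcases le_or_gt 0 x with h | h
  · have := (Real.self_le_sinh_iff).2 h
    nlinarith
  · have hx : (0:ℝ) ≤ -x := by linarith
    have := (Real.self_le_sinh_iff).2 hx
    rw [Real.sinh_neg] at this
    nlinarith

lemma aux_sin_ge_lin {s : ℝ} (h0 : 0 ≤ s) (h1 : s ≤ 1) : s * Real.sin 1 ≤ Real.sin s := by
  have hconc := strictConcaveOn_sin_Icc.concaveOn
  have hpi := Real.pi_gt_three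
  have h0m : (0:ℝ) ∈ Set.Icc (0:ℝ) π := ⟨le_refl 0, by linarith⟩
  have h1m : (1:ℝ) ∈ Set.Icc (0:ℝ) π := ⟨by norm_num, by linarith⟩
  have key := hconc.2 h0m h1m (show (0:ℝ) ≤ 1 - s by linarith) h0 (show (1-s)+s = 1 by ring)
  simp only [smul_eq_mul] at key
  rw [Real.sin_zero] at key
  have h5 : (1-s) * 0 + s * 1 = s := by ring
  rw [h5] at key
  linarith

lemma aux_mul_sin_ge {s : ℝ} (h : s^2 ≤ 1) : s^2 * Real.sin 1 ≤ s * Real.sin s := by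
  rcases le_or_gt 0 s with h0 | h0
  · have hs1 : s ≤ 1 := by nlinarith
    have := aux_sin_ge_lin h0 hs1
    nlinarith
  · have h0' : (0:ℝ) ≤ -s := by linarith
    have hs1 : -s ≤ 1 := by nlinarith
    have := aux_sin_ge_lin h0' hs1
    rw [Real.sin_neg] at this
    nlinarith

lemma aux_key_ineq (θ : ℝ) :
    2 * Real.sin 1 ≤
      Real.exp (Real.cos θ) * Real.cos (θ - Real.sin θ) -
        Real.exp (-Real.cos θ) * Real.cos (θ + Real.sin θ) := by
  set c := Real.cos θ with hc
  set s := Real.sin θ with hs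
  have hcs : s^2 + c^2 = 1 := Real.sin_sq_add_cos_sq θ
  have hrw : Real.exp c * Real.cos (θ - s) - Real.exp (-c) * Real.cos (θ + s)
      = 2 * (c * Real.sinh c * Real.cos s + s * Real.sin s * Real.cosh c) := by
    rw [Real.cos_sub, Real.cos_add, ← Real.cosh_add_sinh c, ← Real.cosh_sub_sinh c]
    ring
  rw [hrw]
  -- ingredient bounds
  have hs2 : s^2 ≤ 1 := by nlinarith
  have hc2 : c^2 ≤ 1 := by nlinarith
  have h1 : c^2 ≤ c * Real.sinh c := aux_mul_sinh_ge c
  have h2 : 1 + c^2/2 ≤ Real.cosh c := aux_cosh_ge c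
  have h3 : 1 - s^2/2 ≤ Real.cos s := Real.one_sub_sq_div_two_le_cos
  have h4 : s^2 * Real.sin 1 ≤ s * Real.sin s := aux_mul_sin_ge hs2
  have hsin1 : Real.sin 1 ≤ 1 := Real.sin_le_one 1
  have hsin1' : 0 ≤ Real.sin 1 := Real.sin_nonneg_of_nonneg_of_le_pi (by norm_num)
    (by have := Real.pi_gt_three; linarith)
  -- products
  have hA : c^2 * (1 - s^2/2) ≤ c * Real.sinh c * Real.cos s := by
    have hpos : (0:ℝ) ≤ 1 - s^2/2 := by nlinarith
    have hpos2 : (0:ℝ) ≤ c^2 := sq_nonneg c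
    nlinarith
  have hB : s^2 * Real.sin 1 * (1 + c^2/2) ≤ s * Real.sin s * Real.cosh c := by
    have hpos : (0:ℝ) ≤ 1 + c^2/2 := by positivity
    have hpos2 : (0:ℝ) ≤ s^2 * Real.sin 1 := by positivity
    nlinarith
  have hs2eq : s^2 = 1 - c^2 := by linarith
  have key : Real.sin 1 ≤ c^2*(1-s^2/2) + s^2*Real.sin 1 * (1+c^2/2) := by
    rw [hs2eq]
    nlinarith [mul_nonneg (mul_nonneg (sq_nonneg c) (show (0:ℝ) ≤ 1 + c^2 by positivity))
      (show (0:ℝ) ≤ 1 - Real.sin 1 by linarith)]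
  linarith

lemma aux_re_eq (θ : ℝ) :
    ((Complex.exp (Complex.exp ((θ : ℂ) * Complex.I)) -
        Complex.exp (-Complex.exp ((θ : ℂ) * Complex.I))) *
      Complex.exp (-((θ : ℂ) * Complex.I))).re =
      Real.exp (Real.cos θ) * Real.cos (θ - Real.sin θ) -
        Real.exp (-Real.cos θ) * Real.cos (θ + Real.sin θ) := by
  rw [sub_mul, ← Complex.exp_add, ← Complex.exp_add, Complex.sub_re,
    Complex.exp_re, Complex.exp_re]
  have h1 : (Complex.exp ((θ : ℂ) * Complex.I)).re = Real.cos θ := by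
    simp [Complex.exp_re]
  have h2 : (Complex.exp ((θ : ℂ) * Complex.I)).im = Real.sin θ := by
    simp [Complex.exp_im]
  simp only [Complex.add_re, Complex.add_im, Complex.neg_re, Complex.neg_im, h1, h2]
  have h3 : (((θ : ℂ) * Complex.I)).re = 0 := by simp
  have h4 : (((θ : ℂ) * Complex.I)).im = θ := by simp
  rw [h3, h4]
  rw [show Real.cos θ + -0 = Real.cos θ by ring, show Real.sin θ + -θ = -(θ - Real.sin θ) by ring,
    show -Real.cos θ + -0 = -Real.cos θ by ring, show -Real.sin θ + -θ = -(θ + Real.sin θ) by ring,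
    Real.cos_neg, Real.cos_neg]

lemma aux_eq_pi_div_two :
    Real.exp (Real.cos (π / 2)) * Real.cos (π / 2 - Real.sin (π / 2)) -
        Real.exp (-Real.cos (π / 2)) * Real.cos (π / 2 + Real.sin (π / 2)) =
      2 * Real.sin 1 := by
  rw [Real.cos_pi_div_two, Real.sin_pi_div_two, Real.cos_pi_div_two_sub]
  have h : Real.cos (π / 2 + 1) = -Real.sin 1 := by
    rw [show π / 2 + 1 = π / 2 - (-1) by ring, Real.cos_pi_div_two_sub, Real.sin_neg]
  rw [h]
  simp [Real.exp_zero]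
  ring

/-- For every `θ ∈ ℝ`,
`Re((e^{e^{iθ}} − e^{−e^{iθ}}) e^{−iθ}) = e^{cos θ} cos(θ − sin θ) − e^{−cos θ} cos(θ + sin θ)`
is at least `2 sin 1`, with equality at `θ = π/2` and `θ = 3π/2`; the minimum over
`θ ∈ [0, 2π)` equals `2 sin 1`. -/
theorem min_re_exp_diff :
    (∀ θ : ℝ,
      ((Complex.exp (Complex.exp ((θ : ℂ) * Complex.I)) -
          Complex.exp (-Complex.exp ((θ : ℂ) * Complex.I))) *
        Complex.exp (-((θ : ℂ) * Complex.I))).re =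
        Real.exp (Real.cos θ) * Real.cos (θ - Real.sin θ) -
          Real.exp (-Real.cos θ) * Real.cos (θ + Real.sin θ) ∧
      2 * Real.sin 1 ≤
        Real.exp (Real.cos θ) * Real.cos (θ - Real.sin θ) -
          Real.exp (-Real.cos θ) * Real.cos (θ + Real.sin θ)) ∧
    (Real.exp (Real.cos (π / 2)) * Real.cos (π / 2 - Real.sin (π / 2)) -
        Real.exp (-Real.cos (π / 2)) * Real.cos (π / 2 + Real.sin (π / 2)) =
      2 * Real.sin 1) ∧
    (Real.exp (Real.cos (3 * π / 2)) * Real.cos (3 * π / 2 - Real.sin (3 * π / 2)) -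
        Real.exp (-Real.cos (3 * π / 2)) * Real.cos (3 * π / 2 + Real.sin (3 * π / 2)) =
      2 * Real.sin 1) ∧
    IsLeast ((fun θ : ℝ =>
        Real.exp (Real.cos θ) * Real.cos (θ - Real.sin θ) -
          Real.exp (-Real.cos θ) * Real.cos (θ + Real.sin θ)) '' Set.Ico 0 (2 * π))
      (2 * Real.sin 1) := by
  have hpi := Real.pi_gt_three
  refine ⟨fun θ => ⟨aux_re_eq θ, aux_key_ineq θ⟩, aux_eq_pi_div_two, ?_, ?_⟩
  · -- θ = 3π/2
    have hc : Real.cos (3 * π / 2) = 0 := by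
      rw [show (3:ℝ) * π / 2 = π / 2 + π by ring, Real.cos_add_pi, Real.cos_pi_div_two, neg_zero]
    have hsn : Real.sin (3 * π / 2) = -1 := by
      rw [show (3:ℝ) * π / 2 = π / 2 + π by ring, Real.sin_add_pi, Real.sin_pi_div_two]
    rw [hc, hsn]
    have e1 : Real.cos (3 * π / 2 - (-1)) = Real.sin 1 := by
      rw [show (3:ℝ) * π / 2 - (-1) = (π / 2 + 1) + π by ring, Real.cos_add_pi,
        show π / 2 + 1 = π / 2 - (-1) by ring, Real.cos_pi_div_two_sub, Real.sin_neg]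
      ring
    have e2 : Real.cos (3 * π / 2 + (-1)) = -Real.sin 1 := by
      rw [show (3:ℝ) * π / 2 + (-1) = (π / 2 - 1) + π by ring, Real.cos_add_pi,
        Real.cos_pi_div_two_sub]
    rw [e1, e2]
    simp [Real.exp_zero]
    ring
  · constructor
    · exact ⟨π / 2, ⟨by positivity, by linarith⟩, aux_eq_pi_div_two⟩
    · rintro x ⟨θ, _, rfl⟩
      exact aux_key_ineq θ
end

section
/- For every θ ∈ ℝ one has Re((e^{e^{iθ}} − 1) e^{−iθ}) = e^{cos θ} cos(θ − sin θ) − cos θ ≥ 1 − 1/e, and equality holds at θ = π; in other words, the minimum over θ ∈ [0, 2π) of this expression equals 1 − 1/e. -/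
/-!
With `z = e^{iθ}`, `(e^z - 1) z⁻¹ = ∑ zⁿ / (n + 1)!`, whose real part is
`∑ cos (nθ) / (n + 1)!`. Since `cos (nθ) - cos (nπ) = (-1)ⁿ (cos (n (π - θ)) - 1)` and
`1 - cos (n x) ≤ n² (1 - cos x)`, the `n`-th term of the difference with `θ = π` is at least
`-n² (1 + cos θ) / (n + 1)!`. Keeping the first five terms exactly and bounding the rest this way,
the difference is at least `(1 + c) (8c³ + 12c² + 20c + 25 - 120 (e - 8/3)) / 120` with
`c = cos θ`, which is nonnegative on `[-1, 1]`.
-/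

open Complex Metric Set Real
open scoped Nat

lemma Real.abs_sin_nat_mul_le (n : ℕ) (x : ℝ) : |Real.sin (n * x)| ≤ n * |Real.sin x| := by
  induction n with
  | zero => simp
  | succ n ih =>
    calc |Real.sin ((n + 1 : ℕ) * x)|
        = |Real.sin (n * x) * Real.cos x + Real.cos (n * x) * Real.sin x| := by
          push_cast; rw [add_mul, one_mul, Real.sin_add]
      _ ≤ |Real.sin (n * x)| * |Real.cos x| + |Real.cos (n * x)| * |Real.sin x| := by
          rw [← abs_mul, ← abs_mul]; exact abs_add_le _ _
      _ ≤ n * |Real.sin x| * 1 + 1 * |Real.sin x| := by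
          gcongr
          exacts [Real.abs_cos_le_one x, Real.abs_cos_le_one _]
      _ = (n + 1 : ℕ) * |Real.sin x| := by push_cast; ring

lemma Real.one_sub_cos_nat_mul_le (n : ℕ) (x : ℝ) :
    1 - Real.cos (n * x) ≤ n ^ 2 * (1 - Real.cos x) := by
  have half_angle (y : ℝ) : 1 - Real.cos y = 2 * |Real.sin (y / 2)| ^ 2 := by
    rw [sq_abs, show y = 2 * (y / 2) by ring, Real.cos_two_mul,
      mul_div_cancel_left₀ _ two_ne_zero]
    linarith [Real.cos_sq_add_sin_sq (y / 2)]
  have h := pow_le_pow_left₀ (abs_nonneg _) (abs_sin_nat_mul_le n (x / 2)) 2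
  rw [mul_pow] at h
  rw [half_angle, half_angle, mul_div_assoc]
  linarith

lemma Real.neg_sq_mul_one_add_cos_le_cos_nat_mul_sub_cos_nat_mul_pi (n : ℕ) (θ : ℝ) :
    -(n ^ 2 * (1 + Real.cos θ)) ≤ Real.cos (n * θ) - Real.cos (n * π) := by
  have hθ : Real.cos (n * θ) = (-1) ^ n * Real.cos (n * (π - θ)) := by
    rw [← Real.cos_nat_mul_pi_sub]; ring_nf
  have h := one_sub_cos_nat_mul_le n (π - θ)
  rw [Real.cos_pi_sub] at h
  rw [hθ, Real.cos_nat_mul_pi]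
  rcases neg_one_pow_eq_or ℝ n with h1 | h1 <;> rw [h1] <;>
    nlinarith [Real.cos_le_one (n * (π - θ)), Real.neg_one_le_cos (n * (π - θ))]

lemma Complex.hasSum_pow_succ_div_factorial (z : ℂ) :
    HasSum (fun n : ℕ => z ^ (n + 1) / (n + 1)!) (exp z - 1) := by
  have h := NormedSpace.expSeries_div_hasSum_exp z
  rw [← exp_eq_exp_ℂ, ← hasSum_nat_add_iff' 1] at h
  simpa using h

lemma hasSum_cos_nat_mul_div_factorial (θ : ℝ) :
    HasSum (fun n : ℕ => Real.cos (n * θ) / (n + 1)!)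
      (((exp (exp (θ * I)) - 1) * exp (-(θ * I))).re) := by
  refine (Complex.hasSum_re ((hasSum_pow_succ_div_factorial _).mul_right _)).congr_fun
    fun n ↦ ?_
  rw [pow_succ, mul_div_right_comm, mul_assoc, ← Complex.exp_add, add_neg_cancel,
    Complex.exp_zero, mul_one, ← Complex.exp_nat_mul, ← Complex.ofReal_natCast, ← mul_assoc,
    ← Complex.ofReal_mul, ← Complex.ofReal_natCast (n + 1)!, Complex.div_ofReal_re,
    exp_ofReal_mul_I_re]

lemma re_exp_exp_mul_I_sub_one_mul_exp (θ : ℝ) :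
    ((exp (exp (θ * I)) - 1) * exp (-(θ * I))).re =
      Real.exp (Real.cos θ) * Real.cos (θ - Real.sin θ) - Real.cos θ := by
  rw [← neg_mul, ← Complex.ofReal_neg, Complex.exp_mul_I, Complex.exp_mul_I, Complex.exp_add,
    Complex.exp_mul_I, ← Complex.ofReal_cos, ← Complex.ofReal_sin, ← Complex.ofReal_cos,
    ← Complex.ofReal_sin, ← Complex.ofReal_cos, ← Complex.ofReal_sin, ← Complex.ofReal_exp]
  simp only [mul_re, mul_im, sub_re, sub_im, add_re, add_im, ofReal_re, ofReal_im, I_re, I_im,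
    one_re, one_im, Real.cos_neg, Real.sin_neg, Real.cos_sub]
  ring

lemma Real.hasSum_one_div_factorial_add (k : ℕ) :
    HasSum (fun n : ℕ => 1 / ((n + k)! : ℝ))
      (Real.exp 1 - ∑ i ∈ Finset.range k, 1 / (i ! : ℝ)) := by
  have h := NormedSpace.expSeries_div_hasSum_exp (1 : ℝ)
  rw [← Real.exp_eq_exp_ℝ, ← hasSum_nat_add_iff' k] at h
  simpa using h

lemma sq_succ_div_factorial_le (n : ℕ) : ((n + 1 : ℕ) : ℝ) ^ 2 / (n + 2)! ≤ 1 / n ! := by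
  have hfact : ((n + 2)! : ℝ) = (n + 2) * (n + 1) * n ! := by
    push_cast [Nat.factorial_succ]; ring
  push_cast
  rw [hfact, div_le_div_iff₀ (by positivity) (by positivity)]
  have : (0 : ℝ) ≤ n ! := by positivity
  nlinarith

lemma sum_range_five_cos_nat_mul_sub_div_factorial (θ : ℝ) :
    ∑ n ∈ Finset.range 5, (Real.cos (n * θ) - Real.cos (n * π)) / (n + 1)! =
      (1 + Real.cos θ) *
        (8 * Real.cos θ ^ 3 + 12 * Real.cos θ ^ 2 + 20 * Real.cos θ + 25) / 120 := by
  have h4 : Real.cos (4 * θ) = 2 * (2 * Real.cos θ ^ 2 - 1) ^ 2 - 1 := by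
    rw [show 4 * θ = 2 * (2 * θ) by ring, Real.cos_two_mul, Real.cos_two_mul]
  simp only [Finset.sum_range_succ, Finset.sum_range_zero, Real.cos_nat_mul_pi]
  norm_num [Nat.factorial, Real.cos_two_mul, Real.cos_three_mul, h4]
  ring

lemma neg_mul_one_div_factorial_le_cos_nat_mul_sub_div_factorial (θ : ℝ) (n : ℕ) :
    -((1 + Real.cos θ) * (1 / (n + 4)!)) ≤
      (Real.cos ((n + 5 : ℕ) * θ) - Real.cos ((n + 5 : ℕ) * π)) / (n + 5 + 1)! := by
  have hc : 0 ≤ 1 + Real.cos θ := by linarith [Real.neg_one_le_cos θ]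
  have hf : ((n + 5 : ℕ) : ℝ) ^ 2 / (n + 5 + 1)! ≤ 1 / (n + 4)! :=
    sq_succ_div_factorial_le (n + 4)
  calc -((1 + Real.cos θ) * (1 / (n + 4)!))
      ≤ -((1 + Real.cos θ) * (((n + 5 : ℕ) : ℝ) ^ 2 / (n + 5 + 1)!)) := by gcongr
    _ = -(((n + 5 : ℕ) : ℝ) ^ 2 * (1 + Real.cos θ)) / (n + 5 + 1)! := by ring
    _ ≤ _ := by gcongr; exact neg_sq_mul_one_add_cos_le_cos_nat_mul_sub_cos_nat_mul_pi (n + 5) θ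

lemma exp_cos_pi_mul_cos_pi_sub_sin_pi_sub_cos_pi :
    Real.exp (Real.cos π) * Real.cos (π - Real.sin π) - Real.cos π = 1 - 1 / Real.exp 1 := by
  rw [Real.cos_pi, Real.sin_pi, sub_zero, Real.cos_pi, Real.exp_neg]; ring

lemma one_sub_inv_exp_one_le (θ : ℝ) :
    1 - 1 / Real.exp 1 ≤ Real.exp (Real.cos θ) * Real.cos (θ - Real.sin θ) - Real.cos θ := by
  set c := Real.cos θ
  have hc : 0 ≤ 1 + c := by linarith [Real.neg_one_le_cos θ]
  have hD := (hasSum_cos_nat_mul_div_factorial θ).sub (hasSum_cos_nat_mul_div_factorial π)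
  simp only [← sub_div] at hD
  rw [re_exp_exp_mul_I_sub_one_mul_exp, re_exp_exp_mul_I_sub_one_mul_exp,
    exp_cos_pi_mul_cos_pi_sub_sin_pi_sub_cos_pi,
    ← hasSum_nat_add_iff' 5, sum_range_five_cos_nat_mul_sub_div_factorial] at hD
  have htail := ((Real.hasSum_one_div_factorial_add 4).mul_left (1 + c)).neg
  have hle := hasSum_le (neg_mul_one_div_factorial_le_cos_nat_mul_sub_div_factorial θ) htail hD
  have he : ∑ i ∈ Finset.range 4, 1 / (i ! : ℝ) = 8 / 3 := by
    norm_num [Finset.sum_range_succ, Nat.factorial]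
  rw [he] at hle
  -- `8c³ + 12c² + 20c + 16 = 8 (1 + c) ((c + 1/4)² + 31/16)` and `120 (e - 8/3) < 9`
  nlinarith [Real.exp_one_lt_d9, Real.cos_le_one θ, mul_nonneg hc (sq_nonneg (c + 1 / 4))]

/-- For every `θ ∈ ℝ`,
`Re((e^{e^{iθ}} − 1) e^{−iθ}) = e^{cos θ} cos(θ − sin θ) − cos θ` is at least
`1 − 1/e`, with equality at `θ = π`; the minimum over `θ ∈ [0, 2π)` equals `1 − 1/e`. -/
theorem min_re_exp_sub_one :
    (∀ θ : ℝ,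
      ((Complex.exp (Complex.exp ((θ : ℂ) * Complex.I)) - 1) *
        Complex.exp (-((θ : ℂ) * Complex.I))).re =
        Real.exp (Real.cos θ) * Real.cos (θ - Real.sin θ) - Real.cos θ ∧
      1 - 1 / Real.exp 1 ≤
        Real.exp (Real.cos θ) * Real.cos (θ - Real.sin θ) - Real.cos θ) ∧
    (Real.exp (Real.cos π) * Real.cos (π - Real.sin π) - Real.cos π = 1 - 1 / Real.exp 1) ∧
    IsLeast ((fun θ : ℝ =>
        Real.exp (Real.cos θ) * Real.cos (θ - Real.sin θ) - Real.cos θ) '' Set.Ico 0 (2 * π))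
      (1 - 1 / Real.exp 1) := by
  have hπ := exp_cos_pi_mul_cos_pi_sub_sin_pi_sub_cos_pi
  refine ⟨fun θ ↦ ⟨re_exp_exp_mul_I_sub_one_mul_exp θ, one_sub_inv_exp_one_le θ⟩, hπ,
    ⟨π, ⟨Real.pi_pos.le, by linarith [Real.pi_pos]⟩, hπ⟩, ?_⟩
  rintro _ ⟨θ, -, rfl⟩
  exact one_sub_inv_exp_one_le θ
end

section
/- For every θ ∈ ℝ one has Re((1 − e^{−e^{iθ}}) e^{−iθ}) = cos θ − e^{−cos θ} cos(θ + sin θ) ≤ e − 1, and equality holds at θ = π; in other words, the maximum over θ ∈ [0, 2π) of this expression equals e − 1. -/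
open Complex Metric Set Real

/-- Key inequality: `e^x ≤ x + e - 1` for `x ∈ [-1, 1]`. -/
lemma exp_le_add_exp_one_sub_one (x : ℝ) (h1 : -1 ≤ x) (h2 : x ≤ 1) :
    Real.exp x ≤ x + Real.exp 1 - 1 := by
  have hE : (2.7182818283 : ℝ) < Real.exp 1 := Real.exp_one_gt_d9
  rcases le_or_gt 0 x with hx | hx
  · have h3 : Real.exp x * (2 - x) ≤ Real.exp 1 := by
      have : Real.exp 1 = Real.exp x * Real.exp (1 - x) := by
        rw [← Real.exp_add]; ring_nf
      rw [this]
      have := Real.add_one_le_exp (1 - x)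
      nlinarith [Real.exp_pos x]
    nlinarith [Real.exp_pos x, mul_nonneg (sub_nonneg.2 h2)
      (by nlinarith : (0:ℝ) ≤ x + Real.exp 1 - 2)]
  · have h3 : Real.exp x * (1 - x) ≤ 1 := by
      have h4 := Real.add_one_le_exp (-x)
      have h5 : Real.exp x * Real.exp (-x) = 1 := by
        rw [← Real.exp_add]; simp
      nlinarith [Real.exp_pos x]
    nlinarith [Real.exp_pos x, mul_nonpos_of_nonpos_of_nonneg (le_of_lt hx)
      (by linarith : (0:ℝ) ≤ x + 1)]

/-- The bound for every real `θ`. -/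
lemma bound_aux (θ : ℝ) :
    Real.cos θ - Real.exp (-Real.cos θ) * Real.cos (θ + Real.sin θ) ≤ Real.exp 1 - 1 := by
  have h1 : Real.exp (-Real.cos θ) * Real.cos (θ + Real.sin θ) ≥ -Real.exp (-Real.cos θ) := by
    nlinarith [Real.neg_one_le_cos (θ + Real.sin θ), Real.exp_pos (-Real.cos θ)]
  have h2 := exp_le_add_exp_one_sub_one (-Real.cos θ)
    (by linarith [Real.cos_le_one θ]) (by linarith [Real.neg_one_le_cos θ])
  linarith

/-- For every `θ ∈ ℝ`,
`Re((1 − e^{−e^{iθ}}) e^{−iθ}) = cos θ − e^{−cos θ} cos(θ + sin θ)` is at most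
`e − 1`, with equality at `θ = π`; the maximum over `θ ∈ [0, 2π)` equals `e − 1`. -/
theorem max_re_one_sub_exp :
    (∀ θ : ℝ,
      ((1 - Complex.exp (-Complex.exp ((θ : ℂ) * Complex.I))) *
        Complex.exp (-((θ : ℂ) * Complex.I))).re =
        Real.cos θ - Real.exp (-Real.cos θ) * Real.cos (θ + Real.sin θ) ∧
      Real.cos θ - Real.exp (-Real.cos θ) * Real.cos (θ + Real.sin θ) ≤ Real.exp 1 - 1) ∧
    (Real.cos π - Real.exp (-Real.cos π) * Real.cos (π + Real.sin π) = Real.exp 1 - 1) ∧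
    IsGreatest ((fun θ : ℝ =>
        Real.cos θ - Real.exp (-Real.cos θ) * Real.cos (θ + Real.sin θ)) '' Set.Ico 0 (2 * π))
      (Real.exp 1 - 1) := by
  have heqπ : Real.cos π - Real.exp (-Real.cos π) * Real.cos (π + Real.sin π)
      = Real.exp 1 - 1 := by
    simp [Real.cos_pi, Real.sin_pi]
    ring
  refine ⟨fun θ => ⟨?_, bound_aux θ⟩, heqπ, ?_⟩
  · simp [Complex.exp_re, Complex.exp_im, Complex.mul_re, Complex.sub_re, Complex.sub_im,
      Complex.neg_re, Complex.neg_im, Complex.mul_im, Real.cos_add]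
    ring
  · constructor
    · exact ⟨π, ⟨Real.pi_pos.le, by linarith [Real.pi_pos]⟩, heqπ⟩
    · rintro y ⟨θ, -, rfl⟩
      exact bound_aux θ
end
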